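/- arXiv:0903.3753 — 4 statements merged into one kernel-verified Lean document; each statement's English description precedes it below -/
import Mathlib

section
/- For integers k and n with 3 ≤ k ≤ n−1, α_k(n−1) = k + Σ_{j=3}^{k} (j−2) · α_k(n−j) + (k−1) · Σ_{j=0}^{n−k−1} α_k(j). -/
/-- All binary words of length `n` (`false` = 0, `true` = 1), listed in lexicographic order. -/
def allWords : ℕ → List (List Bool)
  | 0 => [[]]
  | n + 1 => (allWords n).flatMap (fun w => [w ++ [false], w ++ [true]])

/-- The skew of a binary word: number of 0s minus number of 1s. -/
def skew (w : List Bool) : ℤ := (w.map (fun b => if b then (-1 : ℤ) else 1)).sum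

/-- The discrepancy of a binary word: the maximum over all (nonempty) initial
segments of the absolute difference between the number of 0s and of 1s. -/
def disc (w : List Bool) : ℤ :=
  ((List.range w.length).map (fun M => |skew (w.take (M + 1))|)).foldr max 0

/-- `w` contains a run of `k` consecutive 0s. -/
def hasZeroRun (k : ℕ) (w : List Bool) : Prop := List.replicate k false <:+: w

instance (k : ℕ) : DecidablePred (hasZeroRun k) := fun _ => inferInstanceAs (Decidable (_ <:+: _))

/-- Number of binary words of length `n` containing no run of `k` consecutive 0s. -/
def alpha (k n : ℕ) : ℕ := ((allWords n).filter (fun w => !decide (hasZeroRun k w))).length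

/-- Sum of the skews of all binary words of length `n` containing no run of `k` consecutive 0s. -/
def beta (k n : ℕ) : ℤ :=
  (((allWords n).filter (fun w => !decide (hasZeroRun k w))).map skew).sum

/-- Strict lexicographic order on binary words, with 0 < 1. -/
def lexLt (u v : List Bool) : Prop := List.Lex (· < ·) u v

instance : DecidableRel lexLt := fun _ _ => inferInstanceAs (Decidable (List.Lex _ _ _))

/-- Weak lexicographic order on binary words. -/
def lexLe (u v : List Bool) : Prop := lexLt u v ∨ u = v

instance : DecidableRel lexLe := fun _ _ => inferInstanceAs (Decidable (_ ∨ _))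

/-- A binary Lyndon word: nonempty and strictly lexicographically smaller than
each of its nontrivial cyclic rotations. -/
def IsLyndon (w : List Bool) : Prop :=
  w ≠ [] ∧ ∀ i ∈ Finset.Ico 1 w.length, lexLt w (w.rotate i)

instance : DecidablePred IsLyndon := fun _ => inferInstanceAs (Decidable (_ ∧ _))

/-- `ell n k`: the concatenation, in lexicographic order, of all binary Lyndon words of
length `n` whose longest run of consecutive 0s has length exactly `k`. -/
def ell (n k : ℕ) : List Bool :=
  (List.insertionSort lexLe ((allWords n).filter (fun w =>
    decide (IsLyndon w) && decide (hasZeroRun k w) && !decide (hasZeroRun (k + 1) w)))).flatten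

/-- `LWord n`: the lexicographically least binary de Bruijn sequence of order `n`, i.e. the
concatenation, in lexicographic order, of all binary Lyndon words of length dividing `n`. -/
def LWord (n : ℕ) : List Bool :=
  (List.insertionSort lexLe (((List.range (n + 1)).flatMap allWords).filter
    (fun w => decide (IsLyndon w) && decide (w.length ∣ n)))).flatten

/-- The number of occurrences of `0^k` as a subword of `w`. -/
def occCount (k : ℕ) (w : List Bool) : ℕ :=
  ((List.range (w.length + 1)).filter
    (fun i => decide (List.replicate k false <+: w.drop i))).length

/-!
Sort the words counted by `α_k(n)` by their number `r < k` of trailing zeros. Appending a `1`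
resets `r` to `0` and appending a `0` raises it by one, so the counted words of length
`m + r + 1` with exactly `r` trailing zeros are as many as those counted by `α_k(m)`. Hence
`α_k(m + k) = ∑_{i < k} α_k(m + i)`, while `α_k(i) = 2^i` for `i < k`. For such a sequence both
sides of the identity agree at `n = k` (a sum of the form `∑ (c - i) 2^i`), and they grow by the
same amount from `n` to `n + 1`, by the recurrence and a summation by parts of the weighted sum.
-/

def trailingZeros (w : List Bool) : ℕ := (w.reverse.takeWhile (! ·)).length

@[simp] lemma trailingZeros_nil : trailingZeros [] = 0 := rfl

@[simp] lemma trailingZeros_append_true (w : List Bool) : trailingZeros (w ++ [true]) = 0 := by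
  simp [trailingZeros]

@[simp] lemma trailingZeros_append_false (w : List Bool) :
    trailingZeros (w ++ [false]) = trailingZeros w + 1 := by
  simp [trailingZeros]

lemma replicate_false_suffix_iff {j : ℕ} {w : List Bool} :
    List.replicate j false <:+ w ↔ j ≤ trailingZeros w := by
  induction w using List.reverseRecOn generalizing j with
  | nil => simp [List.replicate_eq_nil_iff]
  | append_singleton w b ih =>
    cases j with
    | zero => simp
    | succ j => cases b <;> simp [List.replicate_succ', List.suffix_concat_iff, ih]

lemma hasZeroRun_append_singleton {k : ℕ} {w : List Bool} {b : Bool} :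
    hasZeroRun k (w ++ [b]) ↔ k ≤ trailingZeros (w ++ [b]) ∨ hasZeroRun k w := by
  simp only [hasZeroRun, List.infix_concat_iff, replicate_false_suffix_iff]

lemma trailingZeros_lt_of_not_hasZeroRun {k : ℕ} {w : List Bool} (h : ¬ hasZeroRun k w) :
    trailingZeros w < k := by
  by_contra! hk
  exact h (replicate_false_suffix_iff.2 hk).isInfix

lemma length_of_mem_allWords {n : ℕ} {w : List Bool} (h : w ∈ allWords n) : w.length = n := by
  induction n generalizing w with
  | zero => simp_all [allWords]
  | succ n ih =>
    simp only [allWords, List.mem_flatMap, List.mem_cons] at h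
    obtain ⟨u, hu, rfl | rfl | h⟩ := h <;> simp_all

lemma length_allWords (n : ℕ) : (allWords n).length = 2 ^ n := by
  induction n with
  | zero => rfl
  | succ n ih => simp [allWords, List.length_flatMap, ih, pow_succ]

lemma countP_allWords_succ (p : List Bool → Bool) (n : ℕ) :
    (allWords (n + 1)).countP p =
      (allWords n).countP (fun w => p (w ++ [false])) +
        (allWords n).countP (fun w => p (w ++ [true])) := by
  simp only [allWords]
  induction allWords n with
  | nil => rfl
  | cons w l ih =>
    simp only [List.flatMap_cons, List.countP_append, List.countP_cons, List.countP_nil, ih]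
    omega

lemma List.countP_eq_sum_countP_fiberwise {α : Type*} {l : List α} {p : α → Bool} {f : α → ℕ}
    {k : ℕ} (h : ∀ x ∈ l, p x → f x < k) :
    l.countP p = ∑ r ∈ Finset.range k, l.countP (fun x => p x && f x == r) := by
  induction l with
  | nil => simp
  | cons x l ih =>
    simp only [List.countP_cons, Finset.sum_add_distrib, ih fun y hy => h y (.tail _ hy)]
    congr 1
    by_cases hx : p x
    · simp [hx, h x (.head _) hx]
    · simp [hx]

lemma alpha_eq_countP (k n : ℕ) :
    alpha k n = (allWords n).countP (fun w => !decide (hasZeroRun k w)) :=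
  (List.countP_eq_length_filter ..).symm

lemma alpha_of_lt {k n : ℕ} (h : n < k) : alpha k n = 2 ^ n := by
  rw [alpha_eq_countP, List.countP_eq_length.2, length_allWords]
  intro w hw
  suffices ¬ hasZeroRun k w by simpa
  intro hz
  have := hz.length_le
  simp [length_of_mem_allWords hw] at this
  omega

/-- The number of words counted by `α_k(n)` that end in exactly `r` zeros. -/
def alphaTrailing (k r n : ℕ) : ℕ :=
  (allWords n).countP (fun w => !decide (hasZeroRun k w) && trailingZeros w == r)

lemma alpha_eq_sum_alphaTrailing (k n : ℕ) :
    alpha k n = ∑ r ∈ Finset.range k, alphaTrailing k r n := by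
  rw [alpha_eq_countP]
  exact List.countP_eq_sum_countP_fiberwise fun w _ hw =>
    trailingZeros_lt_of_not_hasZeroRun (by simpa using hw)

lemma alphaTrailing_zero_succ {k : ℕ} (hk : k ≠ 0) (n : ℕ) :
    alphaTrailing k 0 (n + 1) = alpha k n := by
  simp [alphaTrailing, countP_allWords_succ, hasZeroRun_append_singleton, hk, alpha_eq_countP]

lemma alphaTrailing_succ_succ {k r : ℕ} (hr : r + 1 < k) (n : ℕ) :
    alphaTrailing k (r + 1) (n + 1) = alphaTrailing k r n := by
  simp only [alphaTrailing, countP_allWords_succ, trailingZeros_append_true, Nat.reduceBeqDiff,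
    Bool.and_false, List.countP_false]
  refine List.countP_congr fun w _ => ?_
  by_cases hw : trailingZeros w = r <;> simp [hasZeroRun_append_singleton, hw]
  omega

lemma alphaTrailing_add_succ {k r : ℕ} (hr : r < k) (m : ℕ) :
    alphaTrailing k r (m + r + 1) = alpha k m := by
  induction r with
  | zero => exact alphaTrailing_zero_succ (by omega) m
  | succ r ih => rw [← add_assoc, alphaTrailing_succ_succ hr, ih (by omega)]

lemma alpha_add_eq_sum (k m : ℕ) :
    alpha k (m + k) = ∑ i ∈ Finset.range k, alpha k (m + i) := by
  rw [alpha_eq_sum_alphaTrailing, ← Finset.sum_range_reflect]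
  refine Finset.sum_congr rfl fun i hi => ?_
  have hi := Finset.mem_range.1 hi
  rw [← alphaTrailing_add_succ (r := k - 1 - i) (by omega)]
  congr 1
  omega

lemma sum_range_succ_sub_mul (g : ℕ → ℕ) (c : ℕ) :
    ∑ i ∈ Finset.range (c + 1), (c + 1 - i) * g i =
      ∑ i ∈ Finset.range c, (c - i) * g i + ∑ i ∈ Finset.range (c + 1), g i := by
  rw [← add_zero (∑ i ∈ Finset.range c, (c - i) * g i), ← zero_mul (g c), ← Nat.sub_self c,
    ← Finset.sum_range_succ (fun i => (c - i) * g i), ← Finset.sum_add_distrib]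
  refine Finset.sum_congr rfl fun i hi => ?_
  rw [Nat.sub_add_comm (Finset.mem_range_succ_iff.1 hi), add_one_mul]

lemma sum_range_sub_mul_shift (g : ℕ → ℕ) (c : ℕ) :
    ∑ i ∈ Finset.range c, (c - i) * g (i + 1) + c * g 0 =
      ∑ i ∈ Finset.range c, (c - i) * g i + ∑ i ∈ Finset.range c, g (i + 1) := by
  induction c with
  | zero => simp
  | succ c ih =>
    rw [sum_range_succ_sub_mul, sum_range_succ_sub_mul, Finset.sum_range_succ' g]
    linarith

lemma sum_range_sub_mul_two_pow (c : ℕ) :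
    ∑ i ∈ Finset.range c, (c - i) * 2 ^ i + c + 2 = 2 ^ (c + 1) := by
  induction c with
  | zero => simp
  | succ c ih =>
    have hdouble : ∑ i ∈ Finset.range c, (c + 1 - (i + 1)) * 2 ^ (i + 1) =
        2 * ∑ i ∈ Finset.range c, (c - i) * 2 ^ i := by
      rw [Finset.mul_sum]
      exact Finset.sum_congr rfl fun i _ => by rw [Nat.add_sub_add_right, pow_succ]; ring
    rw [Finset.sum_range_succ', hdouble, pow_succ]
    omega

lemma kbonacci_eq_weighted_sum {a : ℕ → ℕ} {c : ℕ} (hsmall : ∀ i < c + 2, a i = 2 ^ i)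
    (hrec : ∀ m, a (m + (c + 2)) = ∑ i ∈ Finset.range (c + 2), a (m + i)) (m : ℕ) :
    a (m + c + 1) = c + 2 + ∑ i ∈ Finset.range c, (c - i) * a (m + i)
      + (c + 1) * ∑ j ∈ Finset.range m, a j := by
  induction m with
  | zero =>
    have hpow : ∑ i ∈ Finset.range c, (c - i) * a i = ∑ i ∈ Finset.range c, (c - i) * 2 ^ i :=
      Finset.sum_congr rfl fun i hi => by rw [hsmall i (by linarith [Finset.mem_range.1 hi])]
    simp only [zero_add, Finset.range_zero, Finset.sum_empty, mul_zero, add_zero, hpow,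
      hsmall (c + 1) (by omega)]
    linarith [sum_range_sub_mul_two_pow c]
  | succ m ih =>
    have hstep := hrec m
    rw [Finset.sum_range_succ, Finset.sum_range_succ'] at hstep
    have hshift := sum_range_sub_mul_shift (fun i => a (m + i)) c
    simp only [← add_assoc, add_zero] at hstep hshift
    simp only [Finset.sum_range_succ, Nat.add_right_comm m 1]
    linarith

lemma sum_Icc_three_sub_two_mul (f : ℕ → ℕ) (c m : ℕ) :
    ∑ j ∈ Finset.Icc 3 (c + 2), (j - 2) * f (m + (c + 2) - j) =
      ∑ i ∈ Finset.range c, (c - i) * f (m + i) := by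
  rw [← Finset.Ico_add_one_right_eq_Icc]
  calc _ = ∑ j ∈ Finset.Ico 3 (c + 2 + 1), (c - (c + 2 - j)) * f (m + (c + 2 - j)) :=
        Finset.sum_congr rfl fun j hj => by
          rw [Finset.mem_Ico] at hj
          rw [show j - 2 = c - (c + 2 - j) by omega,
            show m + (c + 2) - j = m + (c + 2 - j) by omega]
    _ = _ := by
        rw [Finset.sum_Ico_reflect (fun i => (c - i) * f (m + i)) 3 le_rfl, Nat.sub_self,
          show c + 2 + 1 - 3 = c by omega, Finset.range_eq_Ico]

/-- For `3 ≤ k ≤ n − 1`,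
`α_k(n−1) = k + Σ_{j=3}^{k} (j−2)·α_k(n−j) + (k−1)·Σ_{j=0}^{n−k−1} α_k(j)`. -/
theorem alpha_identity (k n : ℕ) (hk : 3 ≤ k) (hkn : k + 1 ≤ n) :
    alpha k (n - 1) =
      k + (∑ j ∈ Finset.Icc 3 k, (j - 2) * alpha k (n - j))
        + (k - 1) * ∑ j ∈ Finset.range (n - k), alpha k j := by
  obtain ⟨c, rfl⟩ : ∃ c, k = c + 2 := ⟨k - 2, by omega⟩
  obtain ⟨m, rfl⟩ : ∃ m, n = m + (c + 2) := ⟨n - (c + 2), by omega⟩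
  rw [sum_Icc_three_sub_two_mul, show m + (c + 2) - 1 = m + c + 1 by omega, Nat.add_sub_cancel,
    show c + 2 - 1 = c + 1 by omega]
  exact kbonacci_eq_weighted_sum (fun i hi => alpha_of_lt hi) (alpha_add_eq_sum _) m
end

section
/- For integers k and n with 3 ≤ k ≤ n−1, β_k(n) = −k − (k−1) · Σ_{j=0}^{n−k−1} α_k(j) + Σ_{j=1}^{k} β_k(n−j). -/
/-! Let `V(n)` be the set of words of length `n` without `0^k`. Appending a letter to the words of
`V(n)` gives all of `V(n + 1)` except the words `w0` with `w` ending in `0^(k-1)`, and for `n ≥ k`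
these `w` are exactly the words `u10^(k-1)` with `u ∈ V(n - k)`. Summing skews gives
`β(n + 1) = 2β(n) - β(n - k) - (k - 1)α(n - k)`, which is the increment of the right-hand side
from `n` to `n + 1`. At `n = k` both sides equal `-k`: `β(j) = 0` for `j < k`, as then `V(j)`
contains all words, and `V(k)` misses only `0^k`. -/

open Finset

lemma mem_allWords {n : ℕ} {w : List Bool} : w ∈ allWords n ↔ w.length = n := by
  induction n generalizing w with
  | zero => simp [allWords]
  | succ n ih =>
    simp only [allWords, List.mem_flatMap, List.mem_cons, List.not_mem_nil, or_false]
    constructor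
    · rintro ⟨u, hu, rfl | rfl⟩ <;> simp [ih.1 hu]
    · intro hw
      obtain ⟨u, b, rfl⟩ : ∃ u b, w = u ++ [b] := by
        rcases List.eq_nil_or_concat w with rfl | ⟨u, b, rfl⟩
        · simp at hw
        · exact ⟨u, b, List.concat_eq_append ..⟩
      refine ⟨u, ih.2 (by simpa using hw), ?_⟩
      cases b <;> simp

lemma nodup_allWords (n : ℕ) : (allWords n).Nodup := by
  induction n with
  | zero => simp [allWords]
  | succ n ih =>
    refine List.nodup_flatMap.2 ⟨fun w _ => by simp, ih.imp fun hne => ?_⟩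
    simp [Function.onFun, hne.symm]

def words (n : ℕ) : Finset (List Bool) := (allWords n).toFinset

@[simp] lemma mem_words {n : ℕ} {w : List Bool} : w ∈ words n ↔ w.length = n := by
  simp [words, mem_allWords]

lemma sum_words_succ {M : Type*} [AddCommMonoid M] (f : List Bool → M) (n : ℕ) :
    ∑ w ∈ words (n + 1), f w = ∑ w ∈ words n, (f (w ++ [false]) + f (w ++ [true])) := by
  rw [words, words, List.sum_toFinset _ (nodup_allWords _),
    List.sum_toFinset _ (nodup_allWords _), allWords]
  induction allWords n with
  | nil => simp
  | cons w l ih => simp [ih, add_assoc]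

lemma replicate_false_prefix_append_cons_true {k : ℕ} {u v : List Bool} :
    List.replicate k false <+: u ++ true :: v ↔ List.replicate k false <+: u := by
  induction k generalizing u with
  | zero => simp
  | succ k ih =>
    cases u with
    | nil => simp [List.replicate_succ]
    | cons a u => simp [List.replicate_succ, List.cons_prefix_cons, ih]

lemma not_hasZeroRun_of_length_lt {k : ℕ} {w : List Bool} (h : w.length < k) :
    ¬ hasZeroRun k w := fun hw => by
  simpa using (hw.length_le.trans_lt h)

lemma hasZeroRun_append_cons_true {k : ℕ} (hk : 1 ≤ k) {u v : List Bool} :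
    hasZeroRun k (u ++ true :: v) ↔ hasZeroRun k u ∨ hasZeroRun k v := by
  induction u with
  | nil =>
    obtain ⟨k, rfl⟩ : ∃ k', k = k' + 1 := ⟨k - 1, by omega⟩
    simp [hasZeroRun, List.infix_cons_iff, List.replicate_succ]
  | cons a u ih =>
    simp only [hasZeroRun, List.cons_append, List.infix_cons_iff] at ih ⊢
    rw [ih, ← List.cons_append, replicate_false_prefix_append_cons_true]
    tauto

lemma hasZeroRun_append_true {k : ℕ} (hk : 1 ≤ k) {w : List Bool} :
    hasZeroRun k (w ++ [true]) ↔ hasZeroRun k w := by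
  simpa [not_hasZeroRun_of_length_lt (by simpa : [].length < k)] using
    hasZeroRun_append_cons_true hk (u := w) (v := [])

lemma hasZeroRun_reverse {k : ℕ} {w : List Bool} :
    hasZeroRun k w.reverse ↔ hasZeroRun k w := by
  rw [hasZeroRun, ← List.reverse_replicate, List.reverse_infix, hasZeroRun]

lemma hasZeroRun_succ_append_false {k : ℕ} {w : List Bool} :
    hasZeroRun (k + 1) (w ++ [false]) ↔
      hasZeroRun (k + 1) w ∨ List.replicate k false <:+ w := by
  have hprefix : List.replicate (k + 1) false <+: false :: w.reverse ↔
      List.replicate k false <:+ w := by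
    rw [List.replicate_succ, List.cons_prefix_cons, ← List.reverse_prefix, List.reverse_replicate]
    simp
  rw [← hasZeroRun_reverse, List.reverse_append, List.reverse_singleton, List.singleton_append,
    hasZeroRun, List.infix_cons_iff, hprefix, ← hasZeroRun, hasZeroRun_reverse]
  tauto

def zeroRunFree (k n : ℕ) : Finset (List Bool) := {w ∈ words n | ¬ hasZeroRun k w}

lemma beta_eq_sum_zeroRunFree (k n : ℕ) : beta k n = ∑ w ∈ zeroRunFree k n, skew w := by
  rw [beta, ← List.sum_toFinset _ ((nodup_allWords n).filter _), List.toFinset_filter]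
  simp [zeroRunFree, words]

lemma alpha_eq_card_zeroRunFree (k n : ℕ) : alpha k n = #(zeroRunFree k n) := by
  rw [alpha, ← List.toFinset_card_of_nodup ((nodup_allWords n).filter _), List.toFinset_filter]
  simp [zeroRunFree, words]

lemma sum_zeroRunFree_succ {M : Type*} [AddCommMonoid M] (f : List Bool → M) (k n : ℕ) :
    ∑ w ∈ zeroRunFree (k + 1) (n + 1), f w =
      ∑ w ∈ zeroRunFree (k + 1) n with ¬ List.replicate k false <:+ w, f (w ++ [false]) +
        ∑ w ∈ zeroRunFree (k + 1) n, f (w ++ [true]) := by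
  simp only [zeroRunFree, sum_filter, filter_filter, sum_words_succ, sum_add_distrib,
    hasZeroRun_succ_append_false, hasZeroRun_append_true le_add_self, not_or]

lemma sum_zeroRunFree_filter_suffix {M : Type*} [AddCommMonoid M] (g : List Bool → M)
    (k m : ℕ) :
    ∑ w ∈ zeroRunFree (k + 1) (m + (k + 1)) with List.replicate k false <:+ w, g w =
      ∑ u ∈ zeroRunFree (k + 1) m, g (u ++ true :: List.replicate k false) := by
  have hset : {w ∈ zeroRunFree (k + 1) (m + (k + 1)) | List.replicate k false <:+ w} =
      (zeroRunFree (k + 1) m).map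
        ⟨(· ++ true :: List.replicate k false), List.append_left_injective _⟩ := by
    ext w
    simp only [zeroRunFree, mem_filter, mem_words, mem_map, Function.Embedding.coeFn_mk]
    constructor
    · rintro ⟨⟨hlen, hfree⟩, p, rfl⟩
      rcases List.eq_nil_or_concat p with rfl | ⟨u, b, rfl⟩
      · simp at hlen; omega
      rw [List.concat_eq_append] at hlen hfree ⊢
      cases b
      · refine absurd ⟨u, [], ?_⟩ hfree
        simp [List.replicate_succ]
      · have hmono : hasZeroRun (k + 1) u →
            hasZeroRun (k + 1) (u ++ [true] ++ List.replicate k false) :=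
          fun h => h.trans ⟨[], true :: List.replicate k false, by simp⟩
        refine ⟨u, ⟨?_, hfree ∘ hmono⟩, by simp⟩
        simp at hlen
        omega
    · rintro ⟨u, ⟨hlen, hfree⟩, rfl⟩
      refine ⟨⟨by simp [hlen], ?_⟩, (List.suffix_cons _ _).trans (List.suffix_append _ _)⟩
      rw [hasZeroRun_append_cons_true le_add_self]
      exact not_or.2 ⟨hfree, not_hasZeroRun_of_length_lt (by simp)⟩
  rw [hset, sum_map]
  rfl

@[simp] lemma skew_nil : skew [] = 0 := rfl

@[simp] lemma skew_cons (b : Bool) (w : List Bool) :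
    skew (b :: w) = (if b then -1 else 1) + skew w := by
  simp [skew]

@[simp] lemma skew_append (u v : List Bool) : skew (u ++ v) = skew u + skew v := by
  simp [skew]

@[simp] lemma skew_replicate_false (r : ℕ) : skew (List.replicate r false) = r := by
  induction r with
  | zero => rfl
  | succ r ih => simp [List.replicate_succ, ih]; ring

lemma beta_add_succ_add_one (k m : ℕ) :
    beta (k + 1) (m + (k + 1) + 1) =
      2 * beta (k + 1) (m + (k + 1)) - beta (k + 1) m - k * alpha (k + 1) m := by
  set n := m + (k + 1)
  have hsuffix :
      ∑ w ∈ zeroRunFree (k + 1) n with List.replicate k false <:+ w, skew (w ++ [false]) =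
        beta (k + 1) m + k * alpha (k + 1) m := by
    rw [sum_zeroRunFree_filter_suffix, beta_eq_sum_zeroRunFree, alpha_eq_card_zeroRunFree]
    simp [sum_add_distrib, add_comm, mul_comm]
  have hfalse :
      ∑ w ∈ zeroRunFree (k + 1) n, skew (w ++ [false]) = beta (k + 1) n + alpha (k + 1) n := by
    simp [beta_eq_sum_zeroRunFree, alpha_eq_card_zeroRunFree, sum_add_distrib]
  have htrue :
      ∑ w ∈ zeroRunFree (k + 1) n, skew (w ++ [true]) = beta (k + 1) n - alpha (k + 1) n := by
    simp [beta_eq_sum_zeroRunFree, alpha_eq_card_zeroRunFree, sum_add_distrib, sub_eq_add_neg]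
  have hsplit := sum_filter_add_sum_filter_not (zeroRunFree (k + 1) n)
    (List.replicate k false <:+ ·) (fun w => skew (w ++ [false]))
  rw [beta_eq_sum_zeroRunFree (k + 1) (n + 1), sum_zeroRunFree_succ, htrue]
  linarith

lemma sum_skew_words (n : ℕ) : ∑ w ∈ words n, skew w = 0 := by
  induction n with
  | zero => simp [words, allWords]
  | succ n ih => simp [sum_words_succ, sum_add_distrib, ih]

lemma beta_of_lt {k n : ℕ} (h : n < k) : beta k n = 0 := by
  rw [beta_eq_sum_zeroRunFree, zeroRunFree, filter_true_of_mem, sum_skew_words]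
  exact fun w hw => not_hasZeroRun_of_length_lt (by simpa [mem_words.1 hw])

lemma zeroRunFree_self (k : ℕ) : zeroRunFree k k = (words k).erase (List.replicate k false) := by
  ext w
  simp only [zeroRunFree, mem_filter, mem_erase, mem_words]
  constructor
  · rintro ⟨hw, hfree⟩
    exact ⟨fun h => hfree (h ▸ List.infix_rfl), hw⟩
  · rintro ⟨hne, hw⟩
    exact ⟨hw, fun h => hne (List.IsInfix.eq_of_length h (by simp [hw])).symm⟩

lemma beta_self (k : ℕ) : beta k k = -k := by
  rw [beta_eq_sum_zeroRunFree, zeroRunFree_self, sum_erase_eq_sub (by simp), sum_skew_words]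
  simp

lemma sum_Icc_one_add_one_sub {M : Type*} [AddCommGroup M] (g : ℕ → M) (k n : ℕ) :
    ∑ j ∈ Icc 1 k, g (n + 1 - j) = g n + ∑ j ∈ Icc 1 k, g (n - j) - g (n - k) := by
  induction k with
  | zero => simp
  | succ k ih =>
    rw [sum_Icc_succ_top (by omega), sum_Icc_succ_top (by omega), ih, Nat.add_sub_add_right]
    abel

/-- For `3 ≤ k ≤ n − 1`,
`β_k(n) = −k − (k−1)·Σ_{j=0}^{n−k−1} α_k(j) + Σ_{j=1}^{k} β_k(n−j)`. -/
theorem beta_identity (k n : ℕ) (hk : 3 ≤ k) (hkn : k + 1 ≤ n) :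
    beta k n =
      -(k : ℤ) - ((k : ℤ) - 1) * (∑ j ∈ Finset.range (n - k), (alpha k j : ℤ))
        + ∑ j ∈ Finset.Icc 1 k, beta k (n - j) := by
  obtain ⟨k, rfl⟩ : ∃ k', k = k' + 1 := ⟨k - 1, by omega⟩
  replace hkn : k + 1 ≤ n := by omega
  induction n, hkn using Nat.le_induction with
  | base =>
    rw [beta_self, sum_eq_zero fun j hj => beta_of_lt (by simp at hj; omega)]
    simp
  | succ n hn ih =>
    obtain ⟨m, rfl⟩ : ∃ m, n = m + (k + 1) := ⟨n - (k + 1), by omega⟩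
    rw [beta_add_succ_add_one, sum_Icc_one_add_one_sub,
      show m + (k + 1) + 1 - (k + 1) = m + 1 by omega, sum_range_succ]
    rw [Nat.add_sub_cancel] at ih ⊢
    push_cast at ih ⊢
    linarith
end

section
/- Let X be a finite set and let P be a random subset of X in which each element x ∈ X is included independently with probability p_x. Let {Z_i : i ∈ I} be a finite family of subsets of X, let A_i be the event Z_i ⊆ P, let μ = Σ_{i ∈ I} P(A_i), and let Δ = Σ P(A_i ∧ A_j), the sum over all ordered pairs (i, j) with i ≠ j and Z_i ∩ Z_j ≠ ∅. If Δ ≥ μ/2, then P(⋀_{i ∈ I} ¬A_i) ≤ e^{−μ²/(3Δ)}. -/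
/-!
Boppana–Spencer. Write `Āᵢ` for the complement of `Aᵢ` and fix an order on a subfamily `S`.
Then `P(⋂_{i ∈ S} Āᵢ)` is the product of the conditional probabilities `1 - P(Aᵢ | ⋂_{j < i} Āⱼ)`.
Split the earlier `j` into neighbours of `i` (`Zᵢ ∩ Zⱼ ≠ ∅`) and the rest. `Aᵢ` is independent of
the event that no non-neighbour occurs, and by Harris' inequality (FKG for the product measure)
the up-set `Aᵢ ∩ Aⱼ` and that down-set are negatively correlated. Hence
`P(Aᵢ | ⋂_{j < i} Āⱼ) ≥ P(Aᵢ) - ∑_{j < i, j ∼ i} P(Aᵢ ∩ Aⱼ)`, and `1 - x ≤ e^{-x}` gives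
`P(⋂_{i ∈ S} Āᵢ) ≤ exp (-μ_S + Δ_S / 2)`.

A random subfamily containing each `i` independently with probability `t` has
`𝔼[μ_S - Δ_S / 2] = t μ - t² Δ / 2`, so some `S` does at least as well. The choice `t = μ / (2Δ)`,
admissible because `Δ ≥ μ / 2`, gives the exponent `3μ² / (8Δ) ≥ μ² / (3Δ)`.
-/

open MeasureTheory ProbabilityTheory Finset
open scoped ENNReal

lemma measureReal_eq_sum_mul_indicator {Ω : Type*} [Fintype Ω] [MeasurableSpace Ω]
    [MeasurableSingletonClass Ω] (μ : Measure Ω) [IsFiniteMeasure μ] (E : Set Ω) :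
    μ.real E = ∑ ω, μ.real {ω} * E.indicator 1 ω := by
  classical
  simp_rw [Set.indicator_apply, Pi.one_apply, mul_ite, mul_one, mul_zero]
  rw [← Finset.sum_filter, sum_measureReal_singleton]
  congr; ext; simp

lemma IsUpperSet.monotone_indicator_one {α : Type*} [Preorder α] {U : Set α} (hU : IsUpperSet U) :
    Monotone (U.indicator (1 : α → ℝ)) := by
  intro a b hab
  by_cases ha : a ∈ U
  · simp [ha, hU hab ha]
  · simp [ha, Set.indicator_nonneg]

lemma sum_sum_insert_of_symm {I M : Type*} [DecidableEq I] [AddCommMonoid M] {f : I → I → M}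
    (hsymm : ∀ i j, f i j = f j i) {a : I} (ha : f a a = 0) {S : Finset I} (haS : a ∉ S) :
    ∑ i ∈ insert a S, ∑ j ∈ insert a S, f i j =
      ∑ i ∈ S, ∑ j ∈ S, f i j + 2 • ∑ j ∈ S, f a j := by
  simp only [sum_insert haS, ha, zero_add, sum_add_distrib, two_nsmul, hsymm _ a]
  abel

section Product

variable {X : Type*} [Fintype X] {ν : X → Measure Bool} [∀ x, IsProbabilityMeasure (ν x)]

lemma measureReal_pi_inter_eq_mul_of_dependsOn {S T : Finset X} (hST : Disjoint S T)
    {E F : Set (X → Bool)} (hE : DependsOn (· ∈ E) S) (hF : DependsOn (· ∈ F) T) :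
    (Measure.pi ν).real (E ∩ F) = (Measure.pi ν).real E * (Measure.pi ν).real F := by
  have hindep : IndepFun (fun ω (x : S) ↦ ω x) (fun ω (x : T) ↦ ω x) (Measure.pi ν) :=
    (iIndepFun_pi (X := fun _ ↦ id) fun _ ↦ aemeasurable_id).indepFun_finset S T hST
      fun x ↦ measurable_pi_apply x
  have preimage_image {R : Finset X} {G : Set (X → Bool)} (hG : DependsOn (· ∈ G) R) :
      (fun ω (x : R) ↦ ω x) ⁻¹' ((fun ω (x : R) ↦ ω x) '' G) = G := by
    refine Set.Subset.antisymm (fun ω ⟨ω', hω', heq⟩ ↦ ?_) (Set.subset_preimage_image _ _)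
    exact (hG fun x hx ↦ congrFun heq ⟨x, hx⟩).mp hω'
  have := hindep.measure_inter_preimage_eq_mul _ _
    (DiscreteMeasurableSpace.forall_measurableSet ((fun ω (x : S) ↦ ω x) '' E))
    (DiscreteMeasurableSpace.forall_measurableSet ((fun ω (x : T) ↦ ω x) '' F))
  rw [preimage_image hE, preimage_image hF] at this
  simp [measureReal_def, this, ENNReal.toReal_mul]

lemma measureReal_pi_singleton (ω : X → Bool) :
    (Measure.pi ν).real {ω} = ∏ x, (ν x).real {ω x} := by
  simp [measureReal_def, ENNReal.toReal_prod]

theorem measureReal_pi_mul_le_inter {U V : Set (X → Bool)} (hU : IsUpperSet U)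
    (hV : IsUpperSet V) :
    (Measure.pi ν).real U * (Measure.pi ν).real V ≤ (Measure.pi ν).real (U ∩ V) := by
  classical
  have hsupermod (a b : X → Bool) :
      (Measure.pi ν).real {a} * (Measure.pi ν).real {b} ≤
        (Measure.pi ν).real {a ⊓ b} * (Measure.pi ν).real {a ⊔ b} := by
    simp only [measureReal_pi_singleton, ← prod_mul_distrib]
    refine le_of_eq (prod_congr rfl fun x _ ↦ ?_)
    rw [Pi.inf_apply, Pi.sup_apply]
    cases a x <;> cases b x <;> simp [mul_comm]
  have := fkg (U.indicator 1) (V.indicator 1) (fun ω ↦ (Measure.pi ν).real {ω})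
    (fun _ ↦ measureReal_nonneg) (Set.indicator_nonneg fun _ _ ↦ zero_le_one)
    (Set.indicator_nonneg fun _ _ ↦ zero_le_one) hU.monotone_indicator_one
    hV.monotone_indicator_one hsupermod
  simp_rw [← Pi.mul_apply (U.indicator 1), ← Set.inter_indicator_one,
    ← measureReal_eq_sum_mul_indicator] at this
  simpa using this

theorem measureReal_pi_inter_le_mul {U D : Set (X → Bool)} (hU : IsUpperSet U)
    (hD : IsLowerSet D) :
    (Measure.pi ν).real (U ∩ D) ≤ (Measure.pi ν).real U * (Measure.pi ν).real D := by
  have hcorr := measureReal_pi_mul_le_inter (ν := ν) hU hD.compl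
  have hsplit := measureReal_inter_add_sdiff (μ := Measure.pi ν) (s := U)
    (DiscreteMeasurableSpace.forall_measurableSet D)
  rw [probReal_compl_eq_one_sub (DiscreteMeasurableSpace.forall_measurableSet D),
    ← Set.sdiff_eq] at hcorr
  linarith

end Product

section AllTrueOn

variable {X : Type*}

def allTrueOn (T : Finset X) : Set (X → Bool) := {ω | ∀ x ∈ T, ω x = true}

lemma isUpperSet_allTrueOn (T : Finset X) : IsUpperSet (allTrueOn T) :=
  fun _ _ hab ha x hx ↦ hab x (ha x hx)

lemma dependsOn_allTrueOn (T : Finset X) : DependsOn (· ∈ allTrueOn T) T :=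
  fun _ _ hab ↦ propext <| forall₂_congr fun x hx ↦ by rw [hab x hx]

lemma dependsOn_iInter_compl_allTrueOn [DecidableEq X] {I : Type*} (Z : I → Finset X)
    (S : Finset I) : DependsOn (· ∈ ⋂ j ∈ S, (allTrueOn (Z j))ᶜ) (S.biUnion Z : Set X) := by
  intro a b hab
  simp only [Set.mem_iInter, Set.mem_compl_iff]
  exact propext <| forall₂_congr fun j hj ↦ not_congr <| iff_of_eq <|
    dependsOn_allTrueOn (Z j) fun x hx ↦ hab x (by simpa using ⟨j, hj, hx⟩)

lemma isLowerSet_iInter_compl_allTrueOn {I : Type*} (Z : I → Finset X) (S : Finset I) :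
    IsLowerSet (⋂ j ∈ S, (allTrueOn (Z j))ᶜ) :=
  isLowerSet_iInter₂ fun j _ ↦ (isUpperSet_allTrueOn (Z j)).compl

end AllTrueOn

section RandomSubset

variable {I : Type*} [Fintype I]

section Weight

variable [DecidableEq I]

def subsetWeight (t : ℝ) (S : Finset I) : ℝ := t ^ #S * (1 - t) ^ #(univ \ S)

lemma subsetWeight_nonneg {t : ℝ} (ht0 : 0 ≤ t) (ht1 : t ≤ 1) (S : Finset I) :
    0 ≤ subsetWeight t S :=
  mul_nonneg (pow_nonneg ht0 _) (pow_nonneg (sub_nonneg.2 ht1) _)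

lemma sum_subsetWeight_of_subset (t : ℝ) (T : Finset I) :
    ∑ S, (if T ⊆ S then subsetWeight t S else 0) = t ^ #T := by
  have h := prod_add (fun _ ↦ t) (fun i ↦ if i ∈ T then 0 else 1 - t) univ
  rw [powerset_univ] at h
  calc ∑ S, (if T ⊆ S then subsetWeight t S else 0)
      = ∑ S, (∏ _i ∈ S, t) * ∏ i ∈ univ \ S, (if i ∈ T then 0 else 1 - t) := by
        refine sum_congr rfl fun S _ ↦ ?_
        split_ifs with hTS
        · rw [subsetWeight, prod_const, prod_congr rfl fun i hi ↦ if_neg fun hiT ↦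
            (mem_sdiff.1 hi).2 (hTS hiT), prod_const]
        · obtain ⟨i, hiT, hiS⟩ := not_subset.1 hTS
          rw [Finset.prod_eq_zero (mem_sdiff.2 ⟨mem_univ i, hiS⟩) (by simp [hiT]), mul_zero]
    _ = ∏ i, (t + if i ∈ T then 0 else 1 - t) := h.symm
    _ = t ^ #T := by
        rw [← prod_const, ← univ_inter T, ← prod_ite_mem univ T (fun _ ↦ t)]
        refine prod_congr rfl fun i _ ↦ ?_
        split_ifs <;> simp_all

lemma sum_subsetWeight (t : ℝ) : ∑ S : Finset I, subsetWeight t S = 1 := by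
  simpa using sum_subsetWeight_of_subset t (∅ : Finset I)

lemma sum_subsetWeight_mul_sum (t : ℝ) (v : I → ℝ) :
    ∑ S, subsetWeight t S * ∑ i ∈ S, v i = t * ∑ i, v i := by
  calc ∑ S, subsetWeight t S * ∑ i ∈ S, v i
      = ∑ i, (∑ S : Finset I, if {i} ⊆ S then subsetWeight t S else 0) * v i := by
        simp_rw [singleton_subset_iff, sum_mul, ite_mul, zero_mul, mul_sum]
        rw [sum_comm]
        refine sum_congr rfl fun S _ ↦ ?_
        rw [← sum_filter]
        simp
    _ = t * ∑ i, v i := by simp_rw [sum_subsetWeight_of_subset, card_singleton, pow_one, mul_sum]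

lemma sum_subsetWeight_mul_sum_sum (t : ℝ) (c : I → I → ℝ) (hc : ∀ i, c i i = 0) :
    ∑ S, subsetWeight t S * ∑ i ∈ S, ∑ j ∈ S, c i j = t ^ 2 * ∑ i, ∑ j, c i j := by
  have hpair (S : Finset I) : ∑ i ∈ S, ∑ j ∈ S, c i j =
      ∑ i, ∑ j, if {i, j} ⊆ S then c i j else 0 := by
    simp_rw [insert_subset_iff, singleton_subset_iff, ite_and, sum_ite_irrel, sum_const_zero,
      ← sum_filter, filter_mem_eq_inter, univ_inter]
  calc ∑ S, subsetWeight t S * ∑ i ∈ S, ∑ j ∈ S, c i j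
      = ∑ i, ∑ j, (∑ S : Finset I, if {i, j} ⊆ S then subsetWeight t S else 0) * c i j := by
        simp_rw [hpair, mul_sum, sum_mul, ite_mul, mul_ite, zero_mul, mul_zero]
        rw [sum_comm]
        exact sum_congr rfl fun i _ ↦ sum_comm
    _ = ∑ i, ∑ j, t ^ 2 * c i j := by
        refine sum_congr rfl fun i _ ↦ sum_congr rfl fun j _ ↦ ?_
        rcases eq_or_ne i j with rfl | hij
        · simp [hc]
        · rw [sum_subsetWeight_of_subset, card_pair hij]
    _ = t ^ 2 * ∑ i, ∑ j, c i j := by simp_rw [mul_sum]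

end Weight

lemma exists_finset_mean_le (v : I → ℝ) (c : I → I → ℝ) (hc : ∀ i, c i i = 0) {t : ℝ}
    (ht0 : 0 ≤ t) (ht1 : t ≤ 1) :
    ∃ S : Finset I, t * ∑ i, v i - t ^ 2 * (∑ i, ∑ j, c i j) / 2 ≤
      ∑ i ∈ S, v i - (∑ i ∈ S, ∑ j ∈ S, c i j) / 2 := by
  classical
  by_contra! h
  obtain ⟨S₀, -, hS₀⟩ := exists_lt_of_sum_lt (s := univ) (f := 0) (g := subsetWeight t)
    (by rw [sum_subsetWeight (I := I)]; simp)
  have hlt := sum_lt_sum (s := univ)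
    (fun S _ ↦ mul_le_mul_of_nonneg_left (h S).le (subsetWeight_nonneg ht0 ht1 S))
    ⟨S₀, mem_univ _, mul_lt_mul_of_pos_left (h S₀) hS₀⟩
  simp only [mul_sub, sum_sub_distrib, mul_div_assoc', ← sum_div, sum_subsetWeight_mul_sum,
    sum_subsetWeight_mul_sum_sum t c hc, ← sum_mul, sum_subsetWeight, one_mul] at hlt
  exact lt_irrefl _ hlt

end RandomSubset

section Janson

variable {X : Type*} {I : Type*}

noncomputable def jansonMu (P : Measure (X → Bool)) (Z : I → Finset X) (S : Finset I) : ℝ :=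
  ∑ i ∈ S, P.real (allTrueOn (Z i))

noncomputable def jansonDelta [DecidableEq X] [DecidableEq I] (P : Measure (X → Bool))
    (Z : I → Finset X) (S : Finset I) : ℝ :=
  ∑ i ∈ S, ∑ j ∈ S, if i ≠ j ∧ (Z i ∩ Z j).Nonempty then
    P.real (allTrueOn (Z i) ∩ allTrueOn (Z j)) else 0

variable [Fintype X] [DecidableEq X] {ν : X → Measure Bool} [∀ x, IsProbabilityMeasure (ν x)]

theorem sub_sum_mul_measureReal_le_inter (Z : I → Finset X) (i : I) (S : Finset I) :
    ((Measure.pi ν).real (allTrueOn (Z i)) -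
        ∑ j ∈ S, if (Z i ∩ Z j).Nonempty then
          (Measure.pi ν).real (allTrueOn (Z i) ∩ allTrueOn (Z j)) else 0) *
      (Measure.pi ν).real (⋂ j ∈ S, (allTrueOn (Z j))ᶜ) ≤
    (Measure.pi ν).real (allTrueOn (Z i) ∩ ⋂ j ∈ S, (allTrueOn (Z j))ᶜ) := by
  set P := Measure.pi ν
  set A := fun j ↦ allTrueOn (Z j)
  set N := S.filter fun j ↦ (Z i ∩ Z j).Nonempty
  set C := ⋂ j ∈ S, (A j)ᶜ
  set C' := ⋂ j ∈ S.filter (fun j ↦ ¬ (Z i ∩ Z j).Nonempty), (A j)ᶜ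
  have hsplit : A i ∩ C = (A i ∩ C') \ ⋃ j ∈ N, A j := by
    ext ω
    simp only [C, C', N, Set.mem_inter_iff, Set.mem_sdiff, Set.mem_iInter, Set.mem_iUnion,
      Set.mem_compl_iff, mem_filter, not_exists]
    grind
  have hindep : P.real (A i ∩ C') = P.real (A i) * P.real C' := by
    refine measureReal_pi_inter_eq_mul_of_dependsOn ?_ (dependsOn_allTrueOn (Z i))
      (dependsOn_iInter_compl_allTrueOn Z _)
    refine (disjoint_biUnion_right _ _ _).2 fun j hj ↦ ?_
    exact disjoint_iff_inter_eq_empty.2 (not_nonempty_iff_eq_empty.1 (mem_filter.1 hj).2)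
  have hharris (j : I) : P.real (A i ∩ A j ∩ C') ≤ P.real (A i ∩ A j) * P.real C' :=
    measureReal_pi_inter_le_mul ((isUpperSet_allTrueOn _).inter (isUpperSet_allTrueOn _))
      (isLowerSet_iInter_compl_allTrueOn Z _)
  have hunion : P.real (A i ∩ C' ∩ ⋃ j ∈ N, A j) ≤ ∑ j ∈ N, P.real (A i ∩ A j ∩ C') := by
    refine (measureReal_mono ?_ (measure_ne_top _ _)).trans (measureReal_biUnion_finset_le N _)
    exact (Set.inter_iUnion₂ _ _).trans_subset
      (Set.iUnion₂_mono fun j _ ↦ (Set.inter_right_comm _ _ _).le)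
  have hdiff := measureReal_inter_add_sdiff (μ := P) (s := A i ∩ C')
    (DiscreteMeasurableSpace.forall_measurableSet (⋃ j ∈ N, A j))
  have hC : P.real C ≤ P.real C' :=
    measureReal_mono (Set.biInter_mono (filter_subset _ _) fun _ _ ↦ le_rfl)
  rw [← sum_filter]
  have hkey : (P.real (A i) - ∑ j ∈ N, P.real (A i ∩ A j)) * P.real C' ≤ P.real (A i ∩ C) := by
    have := sum_le_sum fun j (_ : j ∈ N) ↦ hharris j
    rw [← sum_mul] at this
    rw [hsplit]
    linarith
  rcases le_total 0 (P.real (A i) - ∑ j ∈ N, P.real (A i ∩ A j)) with hpos | hneg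
  · exact (mul_le_mul_of_nonneg_left hC hpos).trans hkey
  · exact (mul_nonpos_of_nonpos_of_nonneg hneg measureReal_nonneg).trans measureReal_nonneg

theorem measureReal_pi_iInter_compl_le_exp [DecidableEq I] (Z : I → Finset X) (S : Finset I) :
    (Measure.pi ν).real (⋂ i ∈ S, (allTrueOn (Z i))ᶜ) ≤
      Real.exp (-jansonMu (Measure.pi ν) Z S + jansonDelta (Measure.pi ν) Z S / 2) := by
  set P := Measure.pi ν
  induction S using Finset.induction_on with
  | empty => simp [jansonMu, jansonDelta]
  | @insert a S haS ih =>
    set C := ⋂ j ∈ S, (allTrueOn (Z j))ᶜ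
    set s := ∑ j ∈ S, if (Z a ∩ Z j).Nonempty then
      P.real (allTrueOn (Z a) ∩ allTrueOn (Z j)) else 0
    have hmu : jansonMu P Z (insert a S) = P.real (allTrueOn (Z a)) + jansonMu P Z S :=
      sum_insert haS
    have hdelta : jansonDelta P Z (insert a S) = jansonDelta P Z S + 2 * s := by
      rw [jansonDelta, sum_sum_insert_of_symm _ (by simp) haS, nsmul_eq_mul, Nat.cast_ofNat]
      · refine congrArg (_ + 2 * ·) (sum_congr rfl fun j hj ↦ ?_)
        simp [ne_of_mem_of_not_mem hj haS |>.symm]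
      · intro i j
        simp only [ne_comm, inter_comm (Z i), Set.inter_comm (allTrueOn (Z i))]
    have hstep : P.real (C \ allTrueOn (Z a)) ≤
        Real.exp (-(P.real (allTrueOn (Z a)) - s)) * P.real C := by
      have hsplit := measureReal_inter_add_sdiff (μ := P) (s := C)
        (DiscreteMeasurableSpace.forall_measurableSet (allTrueOn (Z a)))
      have hkey := sub_sum_mul_measureReal_le_inter (ν := ν) Z a S
      have hexp := mul_le_mul_of_nonneg_right
        (Real.add_one_le_exp (-(P.real (allTrueOn (Z a)) - s)))
        (measureReal_nonneg (μ := P) (s := C))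
      rw [Set.inter_comm] at hsplit
      linarith
    calc P.real (⋂ i ∈ insert a S, (allTrueOn (Z i))ᶜ) = P.real (C \ allTrueOn (Z a)) := by
          rw [set_biInter_insert, Set.inter_comm, Set.sdiff_eq]
      _ ≤ Real.exp (-(P.real (allTrueOn (Z a)) - s)) *
            Real.exp (-jansonMu P Z S + jansonDelta P Z S / 2) :=
          hstep.trans (mul_le_mul_of_nonneg_left ih (Real.exp_pos _).le)
      _ = Real.exp (-jansonMu P Z (insert a S) + jansonDelta P Z (insert a S) / 2) := by
          rw [← Real.exp_add, hmu, hdelta]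
          ring_nf

theorem measureReal_pi_iInter_compl_le_exp_of_le_one [Fintype I] [DecidableEq I]
    (Z : I → Finset X) {t : ℝ} (ht0 : 0 ≤ t) (ht1 : t ≤ 1) :
    (Measure.pi ν).real (⋂ i, (allTrueOn (Z i))ᶜ) ≤
      Real.exp (-(t * jansonMu (Measure.pi ν) Z univ -
        t ^ 2 * jansonDelta (Measure.pi ν) Z univ / 2)) := by
  obtain ⟨S, hS⟩ := exists_finset_mean_le (fun i ↦ (Measure.pi ν).real (allTrueOn (Z i)))
    (fun i j ↦ if i ≠ j ∧ (Z i ∩ Z j).Nonempty then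
      (Measure.pi ν).real (allTrueOn (Z i) ∩ allTrueOn (Z j)) else 0) (fun _ ↦ by simp) ht0 ht1
  calc (Measure.pi ν).real (⋂ i, (allTrueOn (Z i))ᶜ)
      ≤ (Measure.pi ν).real (⋂ i ∈ S, (allTrueOn (Z i))ᶜ) :=
        measureReal_mono (Set.iInter_subset_iInter₂ _ _) (measure_ne_top _ _)
    _ ≤ _ := measureReal_pi_iInter_compl_le_exp Z S
    _ ≤ _ := by
        rw [Real.exp_le_exp, jansonMu, jansonMu, jansonDelta, jansonDelta]
        linarith

end Janson

/-- **Janson's inequality, upper bound.** Let `P` be a random subset of a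
finite set `X`, each element `x` included independently with probability `p x`; here the
random subset is modeled by the product of Bernoulli measures on `X → Bool`.  For a finite
family of subsets `Z i ⊆ X`, let `A i` be the event `Z i ⊆ P`, let `μ = Σ_i P(A i)`, and let
`Δ` be the sum of `P(A i ∧ A j)` over ordered pairs `i ≠ j` with `Z i ∩ Z j ≠ ∅`.
If `Δ ≥ μ/2`, then `P(⋀_i ¬ A i) ≤ exp (−μ²/(3Δ))`. -/
theorem janson_upper {X : Type*} [Fintype X] [DecidableEq X] {I : Type*} [Fintype I]
    [DecidableEq I]
    (p : X → ℝ≥0∞) (hp : ∀ x, p x ≤ 1)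
    (P : Measure (X → Bool))
    (hP : P = Measure.pi (fun x => (PMF.bernoulli (p x).toNNReal
      (by simpa using ENNReal.toNNReal_mono ENNReal.one_ne_top (hp x))).toMeasure))
    (Z : I → Finset X)
    (A : I → Set (X → Bool))
    (hA : ∀ i, A i = {ω | ∀ x ∈ Z i, ω x = true})
    (mu Delta : ℝ)
    (hmu : mu = ∑ i : I, (P (A i)).toReal)
    (hDelta : Delta = ∑ i : I, ∑ j : I,
      if i ≠ j ∧ (Z i ∩ Z j).Nonempty then (P (A i ∩ A j)).toReal else 0)
    (h : mu / 2 ≤ Delta) :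
    (P (⋂ i : I, (A i)ᶜ)).toReal ≤ Real.exp (-mu ^ 2 / (3 * Delta)) := by
  obtain rfl : A = fun i ↦ allTrueOn (Z i) := funext hA
  subst hP
  have hmu0 : 0 ≤ mu := hmu ▸ sum_nonneg fun _ _ ↦ ENNReal.toReal_nonneg
  have hDelta0 : 0 ≤ Delta := by linarith
  have ht0 : 0 ≤ mu / (2 * Delta) := by positivity
  have ht1 : mu / (2 * Delta) ≤ 1 := div_le_one_of_le₀ (by linarith) (by positivity)
  refine (measureReal_pi_iInter_compl_le_exp_of_le_one Z ht0 ht1).trans (Real.exp_le_exp.2 ?_)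
  rw [← show mu = jansonMu _ Z univ from hmu, ← show Delta = jansonDelta _ Z univ from hDelta]
  rcases hDelta0.eq_or_lt with hzero | hpos
  · simp [← hzero]
  · field_simp
    nlinarith
end

section
/- There exists a constant C > 0 such that for all integers n ≥ 2, Σ_{k=1}^{n−1} k · α_k(n−k−1) ≤ C · 2^n · log n / n (logarithm natural). -/
/-!
Cutting words into blocks shows that `α_k` is submultiplicative, and at least `k·2^(k-1)` words
of length `2k` contain `0^k` (insert `1 0^k` into a word of length `k - 1` at one of its first
`k` positions). Hence `α_k(m) ≤ 2^m (1 - k/2^(k+1))^⌊m/2k⌋ ≤ 2^m e^(1/4 - m/2^(k+2))`, so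
`α_k(m) m² ≤ 64·4^k·2^m`. With `K = ⌊log₂ n⌋`, every term with `k < K` is at most
`128 K 2^k 2^n / n²`, and these add up to `O(K 2^n / n)`; for the terms with `k ≥ K` the trivial
bound `α_k(m) ≤ 2^m` suffices, since `∑_{k ≥ K} k 2^(-k) = (2K + 2) 2^(-K) = O(K / n)`.
-/

open Finset

lemma two_mul_le_two_pow (k : ℕ) : 2 * k ≤ 2 ^ k := by
  cases k with
  | zero => simp
  | succ k => rw [pow_succ]; have := Nat.lt_two_pow_self (n := k); omega

lemma card_toFinset_allWords (n : ℕ) : #(allWords n).toFinset = 2 ^ n := by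
  rw [List.toFinset_card_of_nodup (nodup_allWords n)]
  induction n with
  | zero => rfl
  | succ n ih => simp [allWords, List.length_flatMap, ih, pow_succ]

lemma alpha_eq_card (k n : ℕ) :
    alpha k n = #{w ∈ (allWords n).toFinset | ¬hasZeroRun k w} := by
  rw [alpha, ← List.toFinset_card_of_nodup ((nodup_allWords n).filter _), List.toFinset_filter]
  simp

lemma alpha_add_le_mul (k a b : ℕ) : alpha k (a + b) ≤ alpha k a * alpha k b := by
  simp only [alpha_eq_card, ← card_product]
  refine card_le_card_of_injOn (fun w => (w.take a, w.drop a)) ?_ ?_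
  · intro w hw
    simp only [coe_filter, List.mem_toFinset, mem_allWords, Set.mem_ofPred_eq] at hw
    simp only [coe_product, coe_filter, Set.mem_prod, Set.mem_ofPred_eq, List.mem_toFinset,
      mem_allWords, List.length_take, List.length_drop, hw.1]
    refine ⟨⟨by omega, fun h => hw.2 ?_⟩, by omega, fun h => hw.2 ?_⟩
    · exact h.trans (List.take_prefix a w).isInfix
    · exact h.trans (List.drop_suffix a w).isInfix
  · intro w _ v _ h
    simp only [Prod.mk.injEq] at h
    rw [← List.take_append_drop a w, ← List.take_append_drop a v, h.1, h.2]

lemma alpha_le_two_pow (k n : ℕ) : alpha k n ≤ 2 ^ n := by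
  rw [alpha_eq_card, ← card_toFinset_allWords]
  exact card_filter_le _ _

lemma alpha_mul_add_le (k L q r : ℕ) : alpha k (L * q + r) ≤ alpha k L ^ q * alpha k r := by
  induction q with
  | zero => simp
  | succ q ih =>
    calc alpha k (L * (q + 1) + r) = alpha k (L + (L * q + r)) := by ring_nf
      _ ≤ alpha k L * alpha k (L * q + r) := alpha_add_le_mul k L _
      _ ≤ alpha k L * (alpha k L ^ q * alpha k r) := Nat.mul_le_mul_left _ ih
      _ = alpha k L ^ (q + 1) * alpha k r := by ring

lemma alpha_le_pow_mul_two_pow (k L m : ℕ) :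
    alpha k m ≤ alpha k L ^ (m / L) * 2 ^ (m % L) := by
  conv_lhs => rw [← Nat.div_add_mod m L]
  exact (alpha_mul_add_le k L _ _).trans (Nat.mul_le_mul_left _ (alpha_le_two_pow k _))

def insertOneZeros (k j : ℕ) (u : List Bool) : List Bool :=
  u.take j ++ true :: (List.replicate k false ++ u.drop j)

lemma length_insertOneZeros {k j : ℕ} {u : List Bool} (hj : j ≤ u.length) :
    (insertOneZeros k j u).length = u.length + k + 1 := by
  simp [insertOneZeros, hj]; omega

lemma hasZeroRun_insertOneZeros (k j : ℕ) (u : List Bool) :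
    hasZeroRun k (insertOneZeros k j u) :=
  ⟨u.take j ++ [true], u.drop j, by simp [insertOneZeros]⟩

lemma getElem?_insertOneZeros_self {k j : ℕ} {u : List Bool} (hj : j ≤ u.length) :
    (insertOneZeros k j u)[j]? = some true := by
  simp [insertOneZeros, hj]

lemma getElem?_insertOneZeros_add {k j t : ℕ} {u : List Bool} (hj : j ≤ u.length)
    (ht : t < k) : (insertOneZeros k j u)[j + 1 + t]? = some false := by
  rw [insertOneZeros, List.getElem?_append_right (by simp; omega)]
  simp [show j + 1 + t - min j u.length = t + 1 by omega, List.getElem?_append_left, ht]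

lemma insertOneZeros_ne_of_lt {k j j' : ℕ} {u u' : List Bool} (hj : j ≤ u.length)
    (hj' : j' ≤ u'.length) (hlt : j < j') (hk : j' ≤ j + k) :
    insertOneZeros k j u ≠ insertOneZeros k j' u' := by
  intro h
  -- position `j'` holds the `1` on the right but lies in the run of `0`s on the left
  have hfalse := getElem?_insertOneZeros_add hj (show j' - j - 1 < k by omega)
  rw [h, show j + 1 + (j' - j - 1) = j' by omega, getElem?_insertOneZeros_self hj'] at hfalse
  simp at hfalse

lemma eq_of_insertOneZeros_eq (k j : ℕ) {u u' : List Bool} (hlen : u.length = u'.length)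
    (h : insertOneZeros k j u = insertOneZeros k j u') : u = u' := by
  obtain ⟨htake, hrest⟩ := List.append_inj h (by simp [hlen])
  simp only [List.cons.injEq, List.append_cancel_left_eq, true_and] at hrest
  rw [← List.take_append_drop j u, ← List.take_append_drop j u', htake, hrest]

lemma mul_two_pow_le_card_hasZeroRun (k : ℕ) :
    k * 2 ^ (k - 1) ≤ #{w ∈ (allWords (2 * k)).toFinset | hasZeroRun k w} := by
  rw [show k * 2 ^ (k - 1) = #(range k ×ˢ (allWords (k - 1)).toFinset) by
    simp [card_toFinset_allWords]]
  refine card_le_card_of_injOn (fun x => insertOneZeros k x.1 x.2) ?_ ?_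
  · rintro ⟨j, u⟩ hx
    simp only [coe_product, coe_range, Set.mem_prod, Set.mem_Iio, Finset.mem_coe,
      List.mem_toFinset, mem_allWords] at hx
    simp only [coe_filter, Set.mem_ofPred_eq, List.mem_toFinset, mem_allWords,
      length_insertOneZeros (show j ≤ u.length by omega), hasZeroRun_insertOneZeros, and_true]
    omega
  · rintro ⟨j, u⟩ hx ⟨j', u'⟩ hx' h
    simp only [coe_product, coe_range, Set.mem_prod, Set.mem_Iio, Finset.mem_coe,
      List.mem_toFinset, mem_allWords] at hx hx' h
    rcases lt_trichotomy j j' with hlt | rfl | hlt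
    · exact absurd h (insertOneZeros_ne_of_lt (by omega) (by omega) hlt (by omega))
    · rw [eq_of_insertOneZeros_eq k j (hx.2.trans hx'.2.symm) h]
    · exact absurd h.symm (insertOneZeros_ne_of_lt (by omega) (by omega) hlt (by omega))

lemma alpha_two_mul_add_le (k : ℕ) : alpha k (2 * k) + k * 2 ^ (k - 1) ≤ 2 ^ (2 * k) := by
  have hsplit := card_filter_add_card_filter_not (s := (allWords (2 * k)).toFinset)
    (fun w => ¬hasZeroRun k w)
  simp only [not_not, card_toFinset_allWords] at hsplit
  have := mul_two_pow_le_card_hasZeroRun k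
  rw [alpha_eq_card]
  omega

lemma alpha_le_two_pow_mul_exp {k : ℕ} (hk : 1 ≤ k) (m : ℕ) :
    (alpha k m : ℝ) ≤ 2 ^ m * Real.exp (1 / 4 - m / 2 ^ (k + 2)) := by
  set x : ℝ := k / 2 ^ (k + 1)
  set q := m / (2 * k)
  have hx : x ≤ 1 / 4 := by
    have : (2 * k : ℝ) ≤ 2 ^ k := by exact_mod_cast two_mul_le_two_pow k
    rw [div_le_iff₀ (by positivity), pow_succ]; linarith
  have hblock : (alpha k (2 * k) : ℝ) ≤ 2 ^ (2 * k) * (1 - x) := by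
    have hcount : ((k * 2 ^ (k - 1) : ℕ) : ℝ) = 2 ^ (2 * k) * x := by
      rw [show 2 * k = (k - 1) + (k + 1) by omega, pow_add]
      simp only [x]
      push_cast
      field_simp
    have : (alpha k (2 * k) : ℝ) + ((k * 2 ^ (k - 1) : ℕ) : ℝ) ≤ 2 ^ (2 * k) := by
      exact_mod_cast alpha_two_mul_add_le k
    linarith
  have hdecay : (alpha k m : ℝ) ≤ 2 ^ m * (1 - x) ^ q := by
    calc (alpha k m : ℝ) ≤ (alpha k (2 * k) : ℝ) ^ q * 2 ^ (m % (2 * k)) := by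
          exact_mod_cast alpha_le_pow_mul_two_pow k (2 * k) m
      _ ≤ (2 ^ (2 * k) * (1 - x)) ^ q * 2 ^ (m % (2 * k)) := by gcongr
      _ = 2 ^ (2 * k * q + m % (2 * k)) * (1 - x) ^ q := by
          rw [pow_add, pow_mul (2 : ℝ) (2 * k) q, mul_pow, mul_right_comm]
      _ = 2 ^ m * (1 - x) ^ q := by rw [Nat.div_add_mod]
  have hexponent : -(q * x) ≤ 1 / 4 - m / 2 ^ (k + 2) := by
    have hm : (m : ℝ) ≤ 2 * k * (q + 1) := by
      exact_mod_cast (Nat.lt_mul_div_succ m (by omega : 0 < 2 * k)).le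
    have : (m : ℝ) / 2 ^ (k + 2) ≤ x * (q + 1) := by
      rw [div_le_iff₀ (by positivity)]
      calc (m : ℝ) ≤ 2 * k * (q + 1) := hm
        _ = x * (q + 1) * 2 ^ (k + 2) := by simp only [x]; field_simp; ring
    nlinarith
  calc (alpha k m : ℝ) ≤ 2 ^ m * (1 - x) ^ q := hdecay
    _ ≤ 2 ^ m * Real.exp (-x) ^ q := by
        gcongr
        · linarith
        · linarith [Real.add_one_le_exp (-x)]
    _ = 2 ^ m * Real.exp (-(q * x)) := by rw [← Real.exp_nat_mul]; ring_nf
    _ ≤ 2 ^ m * Real.exp (1 / 4 - m / 2 ^ (k + 2)) := by gcongr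

lemma exp_neg_le_two_div_sq {t : ℝ} (ht : 0 < t) : Real.exp (-t) ≤ 2 / t ^ 2 := by
  rw [Real.exp_neg, inv_le_comm₀ (Real.exp_pos t) (by positivity), inv_div]
  linarith [Real.quadratic_le_exp_of_nonneg ht.le]

lemma exp_quarter_le_two : Real.exp (1 / 4) ≤ 2 := by
  calc Real.exp (1 / 4) ≤ Real.exp (Real.log 2) :=
        Real.exp_le_exp.2 (by linarith [Real.log_two_gt_d9])
    _ = 2 := Real.exp_log two_pos

lemma alpha_mul_sq_le {k : ℕ} (hk : 1 ≤ k) (m : ℕ) :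
    alpha k m * m ^ 2 ≤ 64 * 4 ^ k * 2 ^ m := by
  rcases Nat.eq_zero_or_pos m with rfl | hm
  · simp
  set t : ℝ := m / 2 ^ (k + 2)
  have ht : 0 < t := by positivity
  have hsq : t ^ 2 * (16 * 4 ^ k) = (m : ℝ) ^ 2 := by
    rw [div_pow, ← pow_mul, pow_mul', pow_add]; field_simp; norm_num
  suffices (alpha k m : ℝ) * m ^ 2 ≤ 64 * 4 ^ k * 2 ^ m by exact_mod_cast this
  calc (alpha k m : ℝ) * m ^ 2 ≤ 2 ^ m * (Real.exp (1 / 4) * Real.exp (-t)) * m ^ 2 := by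
        rw [← Real.exp_add, ← sub_eq_add_neg]
        gcongr
        exact alpha_le_two_pow_mul_exp hk m
    _ ≤ 2 ^ m * (2 * (2 / t ^ 2)) * m ^ 2 := by
        gcongr
        · exact exp_quarter_le_two
        · exact exp_neg_le_two_div_sq ht
    _ = 64 * 4 ^ k * 2 ^ m := by rw [← hsq]; field_simp; ring

lemma sq_mul_alpha_sub_le {n k : ℕ} (hk : 1 ≤ k) (hkn : 2 * (k + 1) ≤ n) :
    n ^ 2 * alpha k (n - k - 1) ≤ 128 * 2 ^ k * 2 ^ n := by
  set m := n - k - 1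
  have hn : n = m + (k + 1) := by omega
  have hnm : n ^ 2 ≤ 4 * m ^ 2 := by nlinarith
  calc n ^ 2 * alpha k m ≤ 4 * (alpha k m * m ^ 2) := by nlinarith
    _ ≤ 4 * (64 * 4 ^ k * 2 ^ m) := Nat.mul_le_mul_left _ (alpha_mul_sq_le hk m)
    _ = 128 * 2 ^ k * 2 ^ n := by
        rw [hn, show (4 : ℕ) ^ k = 2 ^ k * 2 ^ k by rw [← mul_pow]; norm_num]; ring

lemma sum_Ico_two_pow_le (K : ℕ) : ∑ k ∈ Ico 1 K, 2 ^ k ≤ 2 ^ K := by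
  calc ∑ k ∈ Ico 1 K, 2 ^ k ≤ ∑ k ∈ range K, 2 ^ k :=
        sum_le_sum_of_subset (fun k hk => by simp at hk ⊢; omega)
    _ ≤ 2 ^ K := by rw [Nat.geomSum_eq le_rfl]; exact (Nat.div_le_self _ _).trans (Nat.sub_le _ _)

lemma mul_sum_head_le {n K : ℕ} (hK : 1 ≤ K) (hKn : 2 ^ K ≤ n) :
    n * ∑ k ∈ Ico 1 K, k * alpha k (n - k - 1) ≤ 128 * K * 2 ^ n := by
  have h2K : 2 * K ≤ n := (two_mul_le_two_pow K).trans hKn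
  have hn : 0 < n := by omega
  refine Nat.le_of_mul_le_mul_left ?_ hn
  calc n * (n * ∑ k ∈ Ico 1 K, k * alpha k (n - k - 1))
      = ∑ k ∈ Ico 1 K, k * (n ^ 2 * alpha k (n - k - 1)) := by
        rw [mul_sum, mul_sum]; refine sum_congr rfl fun k _ => by ring
    _ ≤ ∑ k ∈ Ico 1 K, K * (128 * 2 ^ k * 2 ^ n) := by
        refine sum_le_sum fun k hk => ?_
        rw [mem_Ico] at hk
        exact Nat.mul_le_mul (by omega) (sq_mul_alpha_sub_le hk.1 (by omega))
    _ = 128 * K * 2 ^ n * ∑ k ∈ Ico 1 K, 2 ^ k := by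
        rw [mul_sum]; refine sum_congr rfl fun k _ => by ring
    _ ≤ 128 * K * 2 ^ n * n := Nat.mul_le_mul_left _ ((sum_Ico_two_pow_le K).trans hKn)
    _ = n * (128 * K * 2 ^ n) := by ring

lemma two_pow_mul_sum_Ico_add {K n : ℕ} (h : K ≤ n) :
    2 ^ K * ∑ k ∈ Ico K n, k * 2 ^ (n - k - 1) + (n + 1) * 2 ^ K = (K + 1) * 2 ^ n := by
  induction n, h using Nat.le_induction with
  | base => simp
  | succ n hKn ih =>
    have hdouble : ∑ k ∈ Ico K n, k * 2 ^ (n + 1 - k - 1) =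
        2 * ∑ k ∈ Ico K n, k * 2 ^ (n - k - 1) := by
      rw [mul_sum]
      refine sum_congr rfl fun k hk => ?_
      rw [mem_Ico] at hk
      rw [show n + 1 - k - 1 = n - k - 1 + 1 by omega, pow_succ]; ring
    rw [sum_Ico_succ_top hKn, hdouble, show n + 1 - n - 1 = 0 by omega, pow_zero, pow_succ]
    linarith

lemma two_pow_mul_sum_tail_le {n K : ℕ} (hKn : K ≤ n) :
    2 ^ K * ∑ k ∈ Ico K n, k * alpha k (n - k - 1) ≤ (K + 1) * 2 ^ n := by
  calc 2 ^ K * ∑ k ∈ Ico K n, k * alpha k (n - k - 1)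
      ≤ 2 ^ K * ∑ k ∈ Ico K n, k * 2 ^ (n - k - 1) :=
        Nat.mul_le_mul_left _ (sum_le_sum fun k _ => Nat.mul_le_mul_left _ (alpha_le_two_pow _ _))
    _ ≤ (K + 1) * 2 ^ n := by rw [← two_pow_mul_sum_Ico_add hKn]; omega

lemma mul_sum_alpha_le {n : ℕ} (hn : 2 ≤ n) :
    n * ∑ k ∈ Icc 1 (n - 1), k * alpha k (n - k - 1) ≤ 132 * Nat.log 2 n * 2 ^ n := by
  set K := Nat.log 2 n
  have hK : 1 ≤ K := Nat.log_pos one_lt_two hn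
  have hKn : 2 ^ K ≤ n := Nat.pow_log_le_self 2 (by omega)
  have hnK : n < 2 ^ (K + 1) := Nat.lt_pow_succ_log_self one_lt_two n
  have hKle : K ≤ n := Nat.lt_two_pow_self.le.trans hKn
  have hIcc : Icc 1 (n - 1) = Ico 1 n := by ext; simp; omega
  rw [hIcc, ← sum_Ico_consecutive _ hK hKle, mul_add]
  have hhead := mul_sum_head_le hK hKn
  have htail : n * ∑ k ∈ Ico K n, k * alpha k (n - k - 1) ≤ 2 * ((K + 1) * 2 ^ n) :=
    calc n * ∑ k ∈ Ico K n, k * alpha k (n - k - 1)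
        ≤ 2 ^ (K + 1) * ∑ k ∈ Ico K n, k * alpha k (n - k - 1) :=
          Nat.mul_le_mul_right _ hnK.le
      _ = 2 * (2 ^ K * ∑ k ∈ Ico K n, k * alpha k (n - k - 1)) := by ring
      _ ≤ 2 * ((K + 1) * 2 ^ n) :=
        Nat.mul_le_mul_left _ (two_pow_mul_sum_tail_le hKle)
  have : 2 ^ n ≤ K * 2 ^ n := Nat.le_mul_of_pos_left _ hK
  linarith

lemma natLog_two_le_two_mul_log (n : ℕ) : (Nat.log 2 n : ℝ) ≤ 2 * Real.log n := by
  have hlog2 : 1 / 2 < Real.log 2 := by linarith [Real.log_two_gt_d9]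
  have hlogn : 0 ≤ Real.log n := Real.log_natCast_nonneg n
  calc (Nat.log 2 n : ℝ) ≤ Real.logb 2 n := Real.natLog_le_logb n 2
    _ = Real.log n / Real.log 2 := rfl
    _ ≤ 2 * Real.log n := by
        rw [div_le_iff₀ (by linarith)]; nlinarith

/-- `Σ_{k=1}^{n−1} k·α_k(n−k−1) = O(2^n log n / n)`. -/
theorem sum_alpha_upper :
    ∃ C > (0 : ℝ), ∀ n : ℕ, 2 ≤ n →
      (∑ k ∈ Finset.Icc 1 (n - 1), (k : ℝ) * (alpha k (n - k - 1) : ℝ))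
        ≤ C * 2 ^ n * Real.log n / n := by
  refine ⟨264, by norm_num, fun n hn => ?_⟩
  have hn0 : (0 : ℝ) < n := by positivity
  have hnat : (n : ℝ) * ∑ k ∈ Icc 1 (n - 1), (k : ℝ) * (alpha k (n - k - 1) : ℝ)
      ≤ 132 * Nat.log 2 n * 2 ^ n := by exact_mod_cast mul_sum_alpha_le hn
  rw [le_div_iff₀ hn0]
  nlinarith [natLog_two_le_two_mul_log n, pow_pos (two_pos : (0 : ℝ) < 2) n]
end
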